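/- The span J_SK of shifted Knuth differences is a coideal of the Malvenuto–Reutenauer algebra: if u, v ∈ S_n with u ≡_SK v, then Δ(u − v) ∈ J_SK ⊗ ℤ𝔖 + ℤ𝔖 ⊗ J_SK, where Δ(w) = Σ_{i=0}^{n} w|_{[1,i]} ⊗ st(w|_{[i+1,n]}). -/

import Mathlib

open scoped TensorProduct

/-! ## Words and permutations -/

/-- `w` is a permutation of `{1, …, n}` written as a word. -/
def IsPermWord (n : ℕ) (w : List ℕ) : Prop := w.Perm (List.range' 1 n)

/-- Descent set of a word `w = w₁ … w_n` : `{i ∈ [n-1] : w_i > w_{i+1}}` (1-indexed). -/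
def wordDes (w : List ℕ) : Finset ℕ :=
  (Finset.Icc 1 (w.length - 1)).filter (fun i => w.getD i 0 < w.getD (i - 1) 0)

/-- Peak set of a subset `D ⊆ [n-1]` : `{i ∈ D \ {1} : i - 1 ∉ D}`. -/
def peakOf (D : Finset ℕ) : Finset ℕ := D.filter (fun i => i ≠ 1 ∧ i - 1 ∉ D)

/-- Peak set of a word. -/
def wordPeak (w : List ℕ) : Finset ℕ := peakOf (wordDes w)

/-- The inverse of a permutation word on letters `1, …, n`. -/
def invWord (w : List ℕ) : List ℕ :=
  (List.range' 1 w.length).map (fun j => w.idxOf j + 1)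

/-- Standardization of a word with distinct letters. -/
def stWord (w : List ℕ) : List ℕ := w.map (fun x => w.countP (fun y => y < x) + 1)

/-- Swap the first two letters of a word. -/
def swap2 : List ℕ → List ℕ
  | x :: y :: t => y :: x :: t
  | l => l

/-- `i` occurs to the right of both `i-1` and `i+1` in `w`. -/
def afterBoth (w : List ℕ) (i : ℕ) : Prop :=
  w.idxOf (i - 1) < w.idxOf i ∧ w.idxOf (i + 1) < w.idxOf i

/-! ## Shifted Knuth equivalence -/

/-- One shifted Knuth transformation:
(SK1) `xzy ∼ zxy` (x<y<z), (SK2) `yxz ∼ yzx` (x<y<z), (SK3) swap first two letters. -/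
inductive SKStep : List ℕ → List ℕ → Prop
  | sk1 (a b : List ℕ) (x y z : ℕ) (h1 : x < y) (h2 : y < z) :
      SKStep (a ++ x :: z :: y :: b) (a ++ z :: x :: y :: b)
  | sk2 (a b : List ℕ) (x y z : ℕ) (h1 : x < y) (h2 : y < z) :
      SKStep (a ++ y :: x :: z :: b) (a ++ y :: z :: x :: b)
  | sk3 (b : List ℕ) (x y : ℕ) : SKStep (x :: y :: b) (y :: x :: b)

/-- Shifted Knuth equivalence: the equivalence relation generated by `SKStep`. -/
def SKEquiv : List ℕ → List ℕ → Prop := Relation.EqvGen SKStep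

/-! ## Tableaux (as lists of rows) -/

/-- A strict partition, as a strictly decreasing list of positive integers. -/
def IsStrictPartition (lam : List ℕ) : Prop :=
  lam.Chain' (fun a b => b < a) ∧ ∀ x ∈ lam, 0 < x

/-- A partition, as a weakly decreasing list of positive integers. -/
def IsPartitionList (lam : List ℕ) : Prop :=
  lam.Chain' (fun a b => b ≤ a) ∧ ∀ x ∈ lam, 0 < x

/-- Entry of `T` in row `i` (0-indexed), position `k` within the row. -/
def tget (T : List (List ℕ)) (i k : ℕ) : ℕ := (T.getD i []).getD k 0

/-- `T` is a standard shifted tableau of shape the strict partition `lam`: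
row `i` (0-indexed) occupies visual columns `i, …, i + lamᵢ - 1`, entries are
`1, …, |lam|` each once, rows and columns strictly increase.  (The cell of row
`i+1` at position `k` sits below the cell of row `i` at position `k+1`.) -/
def IsShiftedStdTab (lam : List ℕ) (T : List (List ℕ)) : Prop :=
  T.map List.length = lam ∧
  T.flatten.Perm (List.range' 1 lam.sum) ∧
  (∀ r ∈ T, r.Chain' (· < ·)) ∧
  (∀ i k, i + 1 < T.length → k + 1 < (T.getD i []).length → k < (T.getD (i + 1) []).length →
    tget T i (k + 1) < tget T (i + 1) k)

/-- `T` is a standard Young tableau of (unshifted) shape the partition `lam`. -/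
def IsStdTab (lam : List ℕ) (T : List (List ℕ)) : Prop :=
  T.map List.length = lam ∧
  T.flatten.Perm (List.range' 1 lam.sum) ∧
  (∀ r ∈ T, r.Chain' (· < ·)) ∧
  (∀ i k, i + 1 < T.length → k < (T.getD i []).length → k < (T.getD (i + 1) []).length →
    tget T i k < tget T (i + 1) k)

/-- Index of the row of `T` containing the entry `v`. -/
def tabRowOf (T : List (List ℕ)) (v : ℕ) : ℕ := T.findIdx (fun r => r.contains v)

/-- Descent set of a standard (shifted or unshifted) tableau with entries `1, …, n`:
`{i : i lies strictly above i+1}`. -/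
def tabDes (n : ℕ) (T : List (List ℕ)) : Finset ℕ :=
  (Finset.Icc 1 (n - 1)).filter (fun i => tabRowOf T i < tabRowOf T (i + 1))

/-- Peak set of a standard tableau. -/
def tabPeak (n : ℕ) (T : List (List ℕ)) : Finset ℕ := peakOf (tabDes n T)

/-- Reading word of a tableau: rows from bottom to top, each row left to right. -/
def readingWord (T : List (List ℕ)) : List ℕ := T.reverse.flatten

/-! ## Marked (shifted) tableaux.  An entry is a pair `(v, p)` where `p = true`
means the letter is primed (`v′`); the order on the alphabet is
`1′ < 1 < 2′ < 2 < ⋯`. -/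

/-- Strict order on the marked alphabet. -/
def mLT (x y : ℕ × Bool) : Prop :=
  x.1 < y.1 ∨ (x.1 = y.1 ∧ x.2 = true ∧ y.2 = false)

/-- `T` is a marked-standard shifted tableau of shape the strict partition `lam`:
entries `1, …, |lam|` each once up to primes, rows and columns increasing in the
marked alphabet, no primed entries on the main diagonal (= first cell of each row). -/
def IsMarkedStdTab (lam : List ℕ) (T : List (List (ℕ × Bool))) : Prop :=
  T.map List.length = lam ∧
  (T.flatten.map Prod.fst).Perm (List.range' 1 lam.sum) ∧
  (∀ r ∈ T, r.Chain' mLT) ∧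
  (∀ i k, i + 1 < T.length → k + 1 < (T.getD i []).length → k < (T.getD (i + 1) []).length →
    mLT ((T.getD i []).getD (k + 1) (0, false)) ((T.getD (i + 1) []).getD k (0, false))) ∧
  (∀ r ∈ T, (r.getD 0 (0, false)).2 = false)

/-- Row index of the entry with value `v` (primed or not). -/
def mRowOf (T : List (List (ℕ × Bool))) (v : ℕ) : ℕ :=
  T.findIdx (fun r => r.any (fun e => e.1 == v))

/-- Whether the entry with value `v` is primed in `T`. -/
def mPrime (T : List (List (ℕ × Bool))) (v : ℕ) : Bool :=
  (((T.flatten).find? (fun e => e.1 == v)).getD (0, false)).2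

/-- Descent set of a marked-standard shifted tableau:
`i` is a descent iff (the entry `i` is unprimed and lies strictly above the `(i+1)`-entry)
or (the entry `i+1` is primed and lies weakly above the `i`-entry). -/
def mDes (n : ℕ) (T : List (List (ℕ × Bool))) : Finset ℕ :=
  (Finset.Icc 1 (n - 1)).filter (fun i =>
    (mPrime T i = false ∧ mRowOf T i < mRowOf T (i + 1)) ∨
    (mPrime T (i + 1) = true ∧ mRowOf T (i + 1) ≤ mRowOf T i))

/-- Remove all primes. -/
def unprime (T : List (List (ℕ × Bool))) : List (List ℕ) := T.map (fun r => r.map Prod.fst)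

/-! ## Sagan–Worley (shifted Schensted) insertion.
`swRow f x i t` inserts `x` into row `i` of `t` by Schensted bumping; a bumped
diagonal entry (position 0 of its row) sets off a chain of column insertions
`swCol` (the non-Schensted move).  The returned Boolean records whether a
non-Schensted move occurred.  `f` is a fuel parameter (always sufficient). -/

mutual
  def swRow : ℕ → ℕ → ℕ → List (List ℕ) → List (List ℕ) × Bool
    | 0, _, _, t => (t, false)
    | f + 1, x, i, t =>
      if i < t.length then
        let r := t.getD i []
        let pos := r.findIdx (fun y => decide (x < y))
        if pos < r.length then
          let y := r.getD pos 0
          let t' := t.set i (r.set pos x)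
          if pos = 0 then swCol f y (i + 1) t' else swRow f y (i + 1) t'
        else (t.set i (r ++ [x]), false)
      else (t ++ [[x]], false)
  def swCol : ℕ → ℕ → ℕ → List (List ℕ) → List (List ℕ) × Bool
    | 0, _, _, t => (t, true)
    | f + 1, y, c, t =>
      match (List.range t.length).find? (fun i =>
          decide (i ≤ c) && decide (c - i < (t.getD i []).length) &&
          decide (y < (t.getD i []).getD (c - i) 0)) with
      | some i =>
          let z := (t.getD i []).getD (c - i) 0
          swCol f z (c + 1) (t.set i ((t.getD i []).set (c - i) y))
      | none =>
          match (List.range t.length).find? (fun i =>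
              decide (i ≤ c) && decide ((t.getD i []).length = c - i)) with
          | some i => (t.set i ((t.getD i []) ++ [y]), true)
          | none => (t ++ [[y]], true)
end

/-- One Sagan–Worley insertion step, with ample fuel. -/
def swInsert (t : List (List ℕ)) (x : ℕ) : List (List ℕ) × Bool :=
  swRow (2 * t.flatten.length + x + 4) x 0 t

/-- Running state `(P, Q, k)` of the Sagan–Worley correspondence on the word `w`:
`P` is the insertion tableau, `Q` the (marked) recording tableau, `k` the next label.
The new cell of `Q` is primed exactly when a non-Schensted move occurred. -/
def swSteps (w : List ℕ) : List (List ℕ) × List (List (ℕ × Bool)) × ℕ :=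
  w.foldl (fun acc x =>
    let P := acc.1
    let Q := acc.2.1
    let k := acc.2.2
    let res := swInsert P x
    let P' := res.1
    let i := ((List.range P'.length).find?
      (fun i => decide ((P.getD i []).length < (P'.getD i []).length))).getD 0
    let Q' := if i < Q.length then Q.set i ((Q.getD i []) ++ [(k, res.2)])
              else Q ++ [[(k, res.2)]]
    (P', Q', k + 1)) ([], [], 1)

/-- The Sagan–Worley insertion tableau `P_SW(w)`. -/
def PSW (w : List ℕ) : List (List ℕ) := (swSteps w).1

/-- The Sagan–Worley recording tableau `Q_SW(w)` (a marked tableau). -/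
def QSW (w : List ℕ) : List (List (ℕ × Bool)) := (swSteps w).2.1

/-! ## Ordinary Robinson–Schensted insertion -/

def rsInsert : ℕ → List (List ℕ) → List (List ℕ)
  | x, [] => [[x]]
  | x, r :: rest =>
    let pos := r.findIdx (fun y => decide (x < y))
    if pos < r.length then (r.set pos x) :: rsInsert (r.getD pos 0) rest
    else (r ++ [x]) :: rest

/-- The Robinson–Schensted insertion tableau `P(w)`. -/
def rsP (w : List ℕ) : List (List ℕ) := w.foldl (fun t x => rsInsert x t) []

/-! ## Skew shifted tableaux and rectification -/

/-- A standard skew shifted tableau of shape `nu/lam`: row `i` occupies visual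
columns `i + lamᵢ, …, i + nuᵢ - 1`, filled by `1, …, |nu| - |lam|` each once,
with rows and columns strictly increasing. -/
def IsSkewShiftedStd (nu lam : List ℕ) (S : List (List ℕ)) : Prop :=
  lam.length ≤ nu.length ∧
  (∀ i, lam.getD i 0 ≤ nu.getD i 0) ∧
  S.map List.length = (List.range nu.length).map (fun i => nu.getD i 0 - lam.getD i 0) ∧
  S.flatten.Perm (List.range' 1 (nu.sum - lam.sum)) ∧
  (∀ r ∈ S, r.Chain' (· < ·)) ∧
  (∀ i c, i + 1 < nu.length →
    i + lam.getD i 0 ≤ c → c < i + nu.getD i 0 →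
    (i + 1) + lam.getD (i + 1) 0 ≤ c → c < (i + 1) + nu.getD (i + 1) 0 →
    (S.getD i []).getD (c - i - lam.getD i 0) 0 <
      (S.getD (i + 1) []).getD (c - (i + 1) - lam.getD (i + 1) 0) 0)

/-- Rectification of a skew shifted tableau (jeu de taquin); since sliding
preserves the shifted Knuth class of the reading word, it is the Sagan–Worley
insertion tableau of the reading word. -/
def rectify (S : List (List ℕ)) : List (List ℕ) := PSW (readingWord S)

/-- The standard shifted tableau of shape `mu` whose `i`-th row contains the
consecutive entries `mu₁+⋯+mu_{i-1}+1, …, mu₁+⋯+mu_i`. -/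
def Trow (mu : List ℕ) : List (List ℕ) :=
  (List.range mu.length).map (fun i => List.range' ((mu.take i).sum + 1) (mu.getD i 0))

/-! ## Quasisymmetric functions, Schur functions, Schur P/Q-functions, peak functions.
All live in the power series ring `MvPowerSeries ℕ ℤ` in variables `x₀, x₁, x₂, …`. -/

/-- The fundamental quasisymmetric function `F_D` of degree `n` for `D ⊆ [n-1]`:
`Σ x_{i₁} ⋯ x_{i_n}` over `i₁ ≤ ⋯ ≤ i_n` with `i_k < i_{k+1}` whenever `k ∈ D`
(1-indexed positions). -/
noncomputable def fundQS (n : ℕ) (D : Finset ℕ) : MvPowerSeries ℕ ℤ := fun m =>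
  (Nat.card {l : Fin n → ℕ // Monotone l ∧
    (∀ i j : Fin n, (j : ℕ) = (i : ℕ) + 1 → (j : ℕ) ∈ D → l i < l j) ∧
    (∑ k, Finsupp.single (l k) 1) = m} : ℤ)

/-- The Schur function `s_mu = Σ_{U ∈ SYT(mu)} F_{Des(U)}`, for `mu ⊢ n`. -/
noncomputable def schurF (n : ℕ) (mu : List ℕ) : MvPowerSeries ℕ ℤ :=
  ∑ᶠ T ∈ {T : List (List ℕ) | IsStdTab mu T}, fundQS n (tabDes n T)

/-- Schur's P-function `P_lam = Σ_{S ∈ ShSYT^±(lam)} F_{Des(S)}`, for `lam ⊢ n` strict. -/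
noncomputable def schurPF (n : ℕ) (lam : List ℕ) : MvPowerSeries ℕ ℤ :=
  ∑ᶠ S ∈ {S : List (List (ℕ × Bool)) | IsMarkedStdTab lam S}, fundQS n (mDes n S)

/-- Schur's Q-function `Q_lam = 2^{ℓ(lam)} P_lam`. -/
noncomputable def schurQF (n : ℕ) (lam : List ℕ) : MvPowerSeries ℕ ℤ :=
  (2 ^ lam.length : ℤ) • schurPF n lam

/-- The complete homogeneous symmetric function `h_n = F_∅`. -/
noncomputable def hFun (n : ℕ) : MvPowerSeries ℕ ℤ := fundQS n ∅

/-- The symmetric function `q_n` with `Σ q_n z^n = Π (1+x_i z)/(1-x_i z)`;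
equivalently `q_n = Σ_{α ⊨ n} 2^{ℓ(α)} M_α`, i.e. the coefficient of a monomial
of total degree `n` is `2^{#variables appearing}`. -/
noncomputable def qFun (n : ℕ) : MvPowerSeries ℕ ℤ := fun m =>
  if (m.sum fun _ e => e) = n then 2 ^ m.support.card else 0

/-- The peak function `K_P = 2^{|P|+1} Σ_{D ⊆ [n-1], P ⊆ D △ (D+1)} F_D`. -/
noncomputable def peakKF (n : ℕ) (P : Finset ℕ) : MvPowerSeries ℕ ℤ :=
  (2 ^ (P.card + 1) : ℤ) •
    ∑ D ∈ (Finset.Icc 1 (n - 1)).powerset.filter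
        (fun D => P ⊆ symmDiff D (D.image (· + 1))), fundQS n D

/-! ## The Malvenuto–Reutenauer algebra `ℤ𝔖`, as the free ℤ-module on words. -/

/-- The word with letters the set `A`, whose standardization is `w`. -/
def wordOn (A : Finset ℕ) (w : List ℕ) : List ℕ :=
  w.map (fun i => (A.sort (· ≤ ·)).getD (i - 1) 0)

/-- The Malvenuto–Reutenauer product of two basis permutations `w ∈ S_p`, `w' ∈ S_q`:
`w * w' = Σ uv` over pairs of words with `alph(u) ∪ alph(v) = [p+q]`, `st(u) = w`,
`st(v) = w'`. -/
noncomputable def mulMR (w w' : List ℕ) : (List ℕ) →₀ ℤ :=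
  ∑ A ∈ (Finset.Icc 1 (w.length + w'.length)).powersetCard w.length,
    Finsupp.single
      (wordOn A w ++ wordOn ((Finset.Icc 1 (w.length + w'.length)) \ A) w') 1

/-- The Malvenuto–Reutenauer coproduct of a basis permutation `w ∈ S_n`:
`Δ(w) = Σ_{i=0}^n w|_{[1,i]} ⊗ st(w|_{[i+1,n]})`. -/
noncomputable def coprodMR (w : List ℕ) :
    TensorProduct ℤ ((List ℕ) →₀ ℤ) ((List ℕ) →₀ ℤ) :=
  ∑ i ∈ Finset.range (w.length + 1),
    (Finsupp.single (w.filter (fun x => x ≤ i)) (1 : ℤ)) ⊗ₜ[ℤ]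
      (Finsupp.single (stWord (w.filter (fun x => i < x))) (1 : ℤ))

/-- `J_SK`: the span of the shifted Knuth differences `u - v`, `u ≡_SK v`. -/
noncomputable def JSK : Submodule ℤ ((List ℕ) →₀ ℤ) :=
  Submodule.span ℤ {x | ∃ n u v, IsPermWord n u ∧ IsPermWord n v ∧ SKEquiv u v ∧
    x = Finsupp.single u 1 - Finsupp.single v 1}

/-! ## Marked shifted semistandard tableaux and standardization (for Statement 19) -/

/-- A marked shifted (semistandard) tableau of shape the strict partition `lam`:
letters from `{1′ < 1 < 2′ < 2 < ⋯}`, rows and columns weakly increasing, each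
unprimed letter at most once per column, each primed letter at most once per row,
no primed entries on the main diagonal.  (Since rows/columns weakly increase,
the multiplicity constraints amount to: adjacent equal entries in a row are
unprimed and adjacent equal entries in a column are primed.) -/
def IsMarkedShiftedSSYT (lam : List ℕ) (T : List (List (ℕ × Bool))) : Prop :=
  IsStrictPartition lam ∧
  T.map List.length = lam ∧
  (∀ r ∈ T, ∀ e ∈ r, 0 < e.1) ∧
  (∀ r ∈ T, r.Chain' (fun x y => mLT x y ∨ (x = y ∧ x.2 = false))) ∧
  (∀ i k, i + 1 < T.length → k + 1 < (T.getD i []).length → k < (T.getD (i + 1) []).length →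
    (mLT ((T.getD i []).getD (k + 1) (0, false)) ((T.getD (i + 1) []).getD k (0, false)) ∨
      (((T.getD i []).getD (k + 1) (0, false)) = ((T.getD (i + 1) []).getD k (0, false)) ∧
        ((T.getD i []).getD (k + 1) (0, false)).2 = true))) ∧
  (∀ r ∈ T, (r.getD 0 (0, false)).2 = false)

/-- The cells of a marked tableau, as triples (row, visual column, entry). -/
def cellsOf (T : List (List (ℕ × Bool))) : List (ℕ × ℕ × (ℕ × Bool)) :=
  (T.zipIdx.map Prod.swap).flatMap (fun p => (p.2.zipIdx.map Prod.swap).map (fun q => (p.1, p.1 + q.1, q.2)))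

/-- Sorting key for standardization: letters are ordered by `1′ < 1 < 2′ < 2 < ⋯`;
equal unprimed letters are ordered left to right (by column), equal primed letters
top to bottom (by row). -/
def cellKey (c : ℕ × ℕ × (ℕ × Bool)) : ℕ × ℕ :=
  (2 * c.2.2.1 - (if c.2.2.2 then 1 else 0), if c.2.2.2 then c.1 else c.2.1)

/-- Lexicographic comparison of keys. -/
def keyLt (a b : ℕ × ℕ) : Bool := a.1 < b.1 || (a.1 == b.1 && a.2 < b.2)

/-- Standardization of a marked shifted tableau: each entry is replaced by its
rank (starting from 1) in the key order, keeping its prime. -/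
def stdization (T : List (List (ℕ × Bool))) : List (List (ℕ × Bool)) :=
  (T.zipIdx.map Prod.swap).map (fun p => (p.2.zipIdx.map Prod.swap).map (fun q =>
    (((cellsOf T).filter (fun c => keyLt (cellKey c) (cellKey (p.1, p.1 + q.1, q.2)))).length + 1,
      q.2.2)))

/-- Weight of a marked tableau: `wtOf T i` = number of entries equal to `i` or `i′`. -/
def wtOf (T : List (List (ℕ × Bool))) : ℕ → ℕ :=
  fun i => ((T.flatten).filter (fun e => e.1 == i)).length

/-! Restricting an SK move to the letters in an interval of values either makes it invisible
or leaves an SK move: in the Knuth-type moves the letters trading places are `x` and `z`,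
and an interval containing both also contains `y`; the swap of the first two letters stays
a swap of the first two letters. Standardization is an order-preserving
relabelling, so it maps SK moves to SK moves. Hence both tensor factors of each summand of
`Δ u` are SK-equivalent to those of `Δ v`, and
`a ⊗ b - a' ⊗ b' = (a - a') ⊗ b + a' ⊗ (b - b')`. -/

theorem List.countP_lt_countP_of_imp {α : Type*} {p q : α → Bool} {l : List α}
    (hpq : ∀ a ∈ l, p a → q a) (hex : ∃ a ∈ l, q a ∧ ¬p a) : l.countP p < l.countP q := by
  induction l with
  | nil => simp at hex
  | cons b t ih =>
    have hle : t.countP p ≤ t.countP q :=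
      List.countP_mono_left fun a ha => hpq a (List.mem_cons_of_mem b ha)
    obtain ⟨a, ha, hqa, hpa⟩ := hex
    rw [List.countP_cons, List.countP_cons]
    rcases List.mem_cons.mp ha with rfl | ha
    · simp [hqa, hpa]; omega
    · have := ih (fun a ha => hpq a (List.mem_cons_of_mem b ha)) ⟨a, ha, hqa, hpa⟩
      have := hpq b List.mem_cons_self
      split_ifs <;> simp_all

theorem SKStep.perm {u v : List ℕ} (h : SKStep u v) : u.Perm v := by
  cases h with
  | sk1 a _ _ _ _ _ _ => exact (List.Perm.swap _ _ _).append_left a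
  | sk2 a _ _ y _ _ _ => exact ((List.Perm.swap _ _ _).cons y).append_left a
  | sk3 => exact List.Perm.swap _ _ _

theorem SKEquiv.perm {u v : List ℕ} (h : SKEquiv u v) : u.Perm v := by
  induction h with
  | rel _ _ h => exact h.perm
  | refl => exact List.Perm.refl _
  | symm _ _ _ ih => exact ih.symm
  | trans _ _ _ _ _ ih₁ ih₂ => exact ih₁.trans ih₂

theorem SKStep.filter_eq_or_skStep {u v : List ℕ} (h : SKStep u v) {p : ℕ → Bool}
    (hp : Set.OrdConnected {t | p t}) :
    u.filter p = v.filter p ∨ SKStep (u.filter p) (v.filter p) := by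
  cases h with
  | sk1 a b x y z hxy hyz =>
    have hpy : p x → p z → p y := fun hx hz => hp.out hx hz ⟨hxy.le, hyz.le⟩
    cases hx : p x <;> cases hy : p y <;> cases hz : p z <;> simp_all [List.filter_append]
    exact .inr (.sk1 _ _ _ _ _ hxy hyz)
  | sk2 a b x y z hxy hyz =>
    have hpy : p x → p z → p y := fun hx hz => hp.out hx hz ⟨hxy.le, hyz.le⟩
    cases hx : p x <;> cases hy : p y <;> cases hz : p z <;> simp_all [List.filter_append]
    exact .inr (.sk2 _ _ _ _ _ hxy hyz)
  | sk3 b x y =>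
    cases hx : p x <;> cases hy : p y <;> simp [hx, hy]
    exact .inr (.sk3 _ _ _)

theorem SKEquiv.filter {u v : List ℕ} (h : SKEquiv u v) {p : ℕ → Bool}
    (hp : Set.OrdConnected {t | p t}) : SKEquiv (u.filter p) (v.filter p) := by
  induction h with
  | rel _ _ h =>
    rcases h.filter_eq_or_skStep hp with h | h
    · rw [h]; exact .refl _
    · exact .rel _ _ h
  | refl => exact .refl _
  | symm _ _ _ ih => exact .symm _ _ ih
  | trans _ _ _ _ _ ih₁ ih₂ => exact .trans _ _ _ ih₁ ih₂

theorem SKStep.map {u v : List ℕ} (h : SKStep u v) {f : ℕ → ℕ}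
    (hf : StrictMonoOn f {t | t ∈ u}) : SKStep (u.map f) (v.map f) := by
  cases h with
  | sk1 a b x y z hxy hyz =>
    simpa using SKStep.sk1 (a.map f) (b.map f) _ _ _ (hf (by simp) (by simp) hxy)
      (hf (by simp) (by simp) hyz)
  | sk2 a b x y z hxy hyz =>
    simpa using SKStep.sk2 (a.map f) (b.map f) _ _ _ (hf (by simp) (by simp) hxy)
      (hf (by simp) (by simp) hyz)
  | sk3 b x y => exact .sk3 _ _ _

theorem SKEquiv.map {u v : List ℕ} (h : SKEquiv u v) {f : ℕ → ℕ}
    (hf : StrictMonoOn f {t | t ∈ u}) : SKEquiv (u.map f) (v.map f) := by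
  induction h with
  | rel _ _ h => exact .rel _ _ (h.map hf)
  | refl => exact .refl _
  | symm a b hab ih =>
    have hletters : {t | t ∈ a} = {t | t ∈ b} := Set.ext fun _ => (SKEquiv.perm hab).mem_iff
    exact .symm _ _ (ih (hletters ▸ hf))
  | trans a b c hab _ ih₁ ih₂ =>
    have hletters : {t | t ∈ a} = {t | t ∈ b} := Set.ext fun _ => (SKEquiv.perm hab).mem_iff
    exact .trans _ _ _ (ih₁ hf) (ih₂ (hletters ▸ hf))

theorem strictMonoOn_countP_lt (w : List ℕ) :
    StrictMonoOn (fun x => w.countP (· < x) + 1) {t | t ∈ w} := fun x hx y _ hxy => by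
  have := List.countP_lt_countP_of_imp (l := w) (p := (· < x)) (q := (· < y))
    (fun t _ ht => by simp only [decide_eq_true_eq] at ht ⊢; omega) ⟨x, hx, by simpa using hxy⟩
  simpa using this

theorem stWord_eq_map_of_perm {u v : List ℕ} (h : v.Perm u) :
    stWord v = v.map (fun x => u.countP (· < x) + 1) := by
  simp only [stWord, h.countP_eq]

theorem SKEquiv.stWord {u v : List ℕ} (h : SKEquiv u v) : SKEquiv (stWord u) (stWord v) := by
  rw [stWord_eq_map_of_perm (List.Perm.refl u), stWord_eq_map_of_perm (SKEquiv.perm h).symm]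
  exact h.map (strictMonoOn_countP_lt u)

theorem IsPermWord.nodup {n : ℕ} {w : List ℕ} (hw : IsPermWord n w) : w.Nodup :=
  hw.nodup_iff.mpr List.nodup_range'

theorem IsPermWord.filter_le {n : ℕ} {w : List ℕ} (hw : IsPermWord n w) (i : ℕ) :
    IsPermWord (min i n) (w.filter (· ≤ i)) := by
  rw [IsPermWord, List.perm_ext_iff_of_nodup (hw.nodup.filter _) List.nodup_range']
  intro t
  simp only [List.mem_filter, hw.mem_iff, List.mem_range'_1, decide_eq_true_eq]
  omega

theorem isPermWord_stWord {w : List ℕ} (hw : w.Nodup) : IsPermWord w.length (stWord w) := by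
  have hinj := (strictMonoOn_countP_lt w).injOn
  have hnodup : (stWord w).Nodup := hw.map_on fun x hx y hy hxy => hinj hx hy hxy
  have hsub : stWord w ⊆ List.range' 1 w.length := by
    intro t ht
    obtain ⟨x, hx, rfl⟩ := List.mem_map.mp ht
    have : w.countP (· < x) < w.length := List.countP_lt_length_iff.mpr ⟨x, hx, by simp⟩
    rw [List.mem_range'_1]
    omega
  exact (List.subperm_of_subset hnodup hsub).perm_of_length_le (by simp [stWord])

theorem single_sub_single_mem_JSK {n : ℕ} {u v : List ℕ} (hu : IsPermWord n u)
    (h : SKEquiv u v) : Finsupp.single u 1 - Finsupp.single v 1 ∈ JSK :=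
  Submodule.subset_span ⟨n, u, v, hu, (SKEquiv.perm h).symm.trans hu, h, rfl⟩

theorem TensorProduct.tmul_sub_tmul_mem_span {R M N : Type*} [CommRing R] [AddCommGroup M]
    [Module R M] [AddCommGroup N] [Module R N] {J : Submodule R M} {K : Submodule R N}
    {a a' : M} {b b' : N} (ha : a - a' ∈ J) (hb : b - b' ∈ K) :
    a ⊗ₜ[R] b - a' ⊗ₜ[R] b' ∈ Submodule.span R
      ({x | ∃ a ∈ J, ∃ b : N, x = a ⊗ₜ[R] b} ∪ {x | ∃ a : M, ∃ b ∈ K, x = a ⊗ₜ[R] b}) := by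
  have hsplit : a ⊗ₜ[R] b - a' ⊗ₜ[R] b' = (a - a') ⊗ₜ[R] b + a' ⊗ₜ[R] (b - b') := by
    rw [TensorProduct.sub_tmul, TensorProduct.tmul_sub]; abel
  rw [hsplit]
  exact Submodule.add_mem _ (Submodule.subset_span (.inl ⟨_, ha, b, rfl⟩))
    (Submodule.subset_span (.inr ⟨a', _, hb, rfl⟩))

/-- `J_SK` is a coideal of the Malvenuto–Reutenauer algebra:
if `u ≡_SK v` then `Δ(u - v) ∈ J_SK ⊗ ℤ𝔖 + ℤ𝔖 ⊗ J_SK`. -/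
theorem JSK_coideal (n : ℕ) (u v : List ℕ) (hu : IsPermWord n u) (hv : IsPermWord n v)
    (h : SKEquiv u v) :
    coprodMR u - coprodMR v ∈ Submodule.span ℤ
      ({x | ∃ a ∈ JSK, ∃ b : (List ℕ) →₀ ℤ, x = a ⊗ₜ[ℤ] b} ∪
        {x | ∃ a : (List ℕ) →₀ ℤ, ∃ b ∈ JSK, x = a ⊗ₜ[ℤ] b}) := by
  have hlen : v.length = u.length := (SKEquiv.perm h).length_eq.symm
  unfold coprodMR
  rw [hlen, ← Finset.sum_sub_distrib]
  refine Submodule.sum_mem _ fun i _ => TensorProduct.tmul_sub_tmul_mem_span ?_ ?_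
  · exact single_sub_single_mem_JSK (hu.filter_le i)
      (h.filter (by simp only [decide_eq_true_eq]; exact Set.ordConnected_Iic))
  · exact single_sub_single_mem_JSK (isPermWord_stWord (hu.nodup.filter _))
      (h.filter (by simp only [decide_eq_true_eq]; exact Set.ordConnected_Ioi)).stWord
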